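/- arXiv:math/0409137 — 2 statements merged into one kernel-verified Lean document; each statement's English description precedes it below -/
import Mathlib

section
/- Let V be a finite-dimensional real inner product space, D a self-adjoint invertible endomorphism, and J an orthogonal complex structure (J² = -id). Then D and JDJ commute if and only if there exists an orthonormal basis diagonalising D whose elements are mapped by J to multiples of basis elements (a unitary eigenbasis for D). -/
/-
If `D` commutes with `A = JDJ`, both are self-adjoint, so every subspace invariant under `D` and
`J` contains a unit common eigenvector `x` of `D` and `A`. From `J² = -1`, `D (J x) = -b • J x`
when `A x = b • x`, and `J x` is a unit vector orthogonal to `x`; so `{x, J x}` can be added to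
any orthonormal set of eigenvectors of `D` that `J` maps to multiples of its elements, provided
`x` is orthogonal to that set. The orthogonal complement of the span of such a set is again
invariant under `D` (self-adjoint) and `J` (skew-adjoint), so a maximal one, given by Zorn's
lemma, spans `V`.

Conversely, if `J bᵢ = μ • bⱼ` and `D bⱼ = c • bⱼ`, then `JDJ bᵢ = -c • bᵢ`: the basis
diagonalises both `D` and `JDJ`, which therefore commute.
-/

open Module Submodule
open scoped RealInnerProductSpace

section General

variable {𝕜 E : Type*} [RCLike 𝕜] [NormedAddCommGroup E] [InnerProductSpace 𝕜 E]

theorem orthogonalComplement_mem_invtSubmodule_of_skew {T : E →ₗ[𝕜] E}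
    (hT : ∀ x y, inner 𝕜 (T x) y = -inner 𝕜 x (T y)) {p : Submodule 𝕜 E}
    (hp : p ∈ End.invtSubmodule T) : pᗮ ∈ End.invtSubmodule T := by
  intro x hx y hy
  rw [← neg_eq_zero, ← hT, hx (T y) (hp hy)]

theorem Orthonormal.insert_of_mem_orthogonal {s : Set E}
    (hs : Orthonormal 𝕜 (Subtype.val : s → E)) {x : E} (hx : x ∈ (span 𝕜 s)ᗮ) (hx1 : ‖x‖ = 1) :
    Orthonormal 𝕜 (Subtype.val : ↥(insert x s) → E) := by
  classical
  have hxs : ∀ v ∈ s, inner 𝕜 v x = 0 := fun v hv => hx v (subset_span hv)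
  have hxs' : ∀ v ∈ s, inner 𝕜 x v = 0 := fun v hv => inner_eq_zero_symm.1 (hxs v hv)
  have hxx : inner 𝕜 x x = (1 : 𝕜) := by simp [inner_self_eq_norm_sq_to_K, hx1]
  have hne : ∀ v ∈ s, v ≠ x := fun v hv hvx => by
    have := hxs v hv
    rw [hvx, hxx] at this
    exact one_ne_zero this
  rw [orthonormal_subtype_iff_ite] at hs ⊢
  rintro v (rfl | hv) w (rfl | hw)
  · rw [if_pos rfl, hxx]
  · simp [hxs' w hw, (hne w hw).symm]
  · simp [hxs v hv, hne v hv]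
  · exact hs v hv w hw

variable [FiniteDimensional 𝕜 E]

theorem LinearMap.IsSymmetric.exists_common_eigenvector [Nontrivial E] {T S : E →ₗ[𝕜] E}
    (hT : T.IsSymmetric) (hS : S.IsSymmetric) (hTS : Commute T S) :
    ∃ x : E, x ≠ 0 ∧ ∃ a b : 𝕜, T x = a • x ∧ S x = b • x := by
  have htop := hT.iSup_iSup_eigenspace_inf_eigenspace_eq_top_of_commute hS hTS
  by_contra! h
  have hbot : ∀ a b, End.eigenspace T a ⊓ End.eigenspace S b = ⊥ := fun a b =>
    (Submodule.eq_bot_iff _).2 fun x hx => by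
      by_contra hx0
      exact h x hx0 a b (End.mem_eigenspace_iff.1 hx.1) (End.mem_eigenspace_iff.1 hx.2)
  simp [hbot] at htop

theorem LinearMap.IsSymmetric.exists_common_eigenvector_mem {T S : E →ₗ[𝕜] E}
    (hT : T.IsSymmetric) (hS : S.IsSymmetric) (hTS : Commute T S) {W : Submodule 𝕜 E}
    (hW : W ≠ ⊥) (hTW : W ∈ End.invtSubmodule T) (hSW : W ∈ End.invtSubmodule S) :
    ∃ x ∈ W, ‖x‖ = 1 ∧ ∃ a b : 𝕜, T x = a • x ∧ S x = b • x := by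
  have : Nontrivial W := Submodule.nontrivial_iff_ne_bot.2 hW
  obtain ⟨x, hx0, a, b, hTx, hSx⟩ := (hT.restrict_invariant hTW).exists_common_eigenvector
    (hS.restrict_invariant hSW) (LinearMap.restrict_commute hTS hTW hSW)
  have hx0' : (x : E) ≠ 0 := by simpa using hx0
  refine ⟨(‖(x : E)‖⁻¹ : 𝕜) • x, W.smul_mem _ x.2, norm_smul_inv_norm hx0', a, b, ?_, ?_⟩
  · rw [map_smul, smul_comm, ← W.coe_smul, ← hTx]; rfl
  · rw [map_smul, smul_comm, ← W.coe_smul, ← hSx]; rfl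

end General

theorem Module.Basis.comp_comm_of_forall_eigenvector {ι R M : Type*} [CommSemiring R]
    [AddCommMonoid M] [Module R M] (b : Basis ι R M) {f g : M →ₗ[R] M}
    (hf : ∀ i, ∃ c : R, f (b i) = c • b i) (hg : ∀ i, ∃ c : R, g (b i) = c • b i) :
    f ∘ₗ g = g ∘ₗ f := by
  refine b.ext fun i => ?_
  obtain ⟨c, hc⟩ := hf i
  obtain ⟨d, hd⟩ := hg i
  simp only [LinearMap.comp_apply, hc, hd, map_smul, smul_smul, mul_comm]

section ComplexStructure

variable {V : Type*} [NormedAddCommGroup V] [InnerProductSpace ℝ V] {D J : V →ₗ[ℝ] V}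

theorem inner_map_left_eq_neg_inner_map_right
    (hJorth : ∀ x y, ⟪J x, J y⟫ = ⟪x, y⟫) (hJJ : ∀ x, J (J x) = -x) (x y : V) :
    ⟪J x, y⟫ = -⟪x, J y⟫ := by
  rw [← hJorth x (J y), hJJ, inner_neg_right, neg_neg]

theorem isSymmetric_comp_comp_of_skew (hD : D.IsSymmetric)
    (hJ : ∀ x y, ⟪J x, y⟫ = -⟪x, J y⟫) : (J ∘ₗ D ∘ₗ J).IsSymmetric := fun x y => by
  simp only [LinearMap.comp_apply]
  rw [hJ, hD, hJ, neg_neg]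

theorem comp_comp_apply_eq_neg_smul (hJJ : ∀ x, J (J x) = -x) {v w : V} {μ c : ℝ}
    (hJv : J v = μ • w) (hDw : D w = c • w) : (J ∘ₗ D ∘ₗ J) v = -c • v := by
  rw [LinearMap.comp_apply, LinearMap.comp_apply, hJv, map_smul, hDw, smul_comm, map_smul,
    ← hJv, hJJ, smul_neg, neg_smul]

theorem map_eq_neg_smul_of_comp_comp_eq_smul (hJJ : ∀ x, J (J x) = -x) {x : V} {b : ℝ}
    (hAx : (J ∘ₗ D ∘ₗ J) x = b • x) : D (J x) = -b • J x := by
  have := congrArg J hAx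
  rw [LinearMap.comp_apply, LinearMap.comp_apply, hJJ, map_smul] at this
  rw [neg_smul, ← this, neg_neg]

variable (D J) in
def IsUnitaryEigenset (s : Set V) : Prop :=
  Orthonormal ℝ (Subtype.val : s → V) ∧ (∀ v ∈ s, ∃ c : ℝ, D v = c • v) ∧
    ∀ v ∈ s, ∃ w ∈ s, ∃ μ : ℝ, J v = μ • w

theorem isUnitaryEigenset_sUnion {c : Set (Set V)} (hc : DirectedOn (· ⊆ ·) c)
    (h : ∀ s ∈ c, IsUnitaryEigenset D J s) : IsUnitaryEigenset D J (⋃₀ c) := by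
  refine ⟨orthonormal_sUnion_of_directed hc fun s hs => (h s hs).1, ?_, ?_⟩
  · rintro v ⟨s, hs, hv⟩
    exact (h s hs).2.1 v hv
  · rintro v ⟨s, hs, hv⟩
    obtain ⟨w, hw, hJv⟩ := (h s hs).2.2 v hv
    exact ⟨w, ⟨s, hs, hw⟩, hJv⟩

variable (D J) in
theorem exists_maximal_isUnitaryEigenset : ∃ s : Set V, Maximal (IsUnitaryEigenset D J) s :=
  zorn_subset {s | IsUnitaryEigenset D J s} fun c hc hchain =>
    ⟨⋃₀ c, isUnitaryEigenset_sUnion hchain.directedOn hc, fun _ => Set.subset_sUnion_of_mem⟩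

namespace IsUnitaryEigenset

variable {s : Set V}

theorem span_mem_invtSubmodule_left (hs : IsUnitaryEigenset D J s) :
    span ℝ s ∈ End.invtSubmodule D := by
  rw [End.mem_invtSubmodule, span_le]
  intro v hv
  obtain ⟨c, hc⟩ := hs.2.1 v hv
  simpa [hc] using smul_mem _ c (subset_span hv)

theorem span_mem_invtSubmodule_right (hs : IsUnitaryEigenset D J s) :
    span ℝ s ∈ End.invtSubmodule J := by
  rw [End.mem_invtSubmodule, span_le]
  intro v hv
  obtain ⟨w, hw, μ, hJv⟩ := hs.2.2 v hv
  simpa [hJv] using smul_mem _ μ (subset_span hw)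

theorem insert_insert (hs : IsUnitaryEigenset D J s) (hJorth : ∀ x y, ⟪J x, J y⟫ = ⟪x, y⟫)
    (hJJ : ∀ x, J (J x) = -x) (hJW : (span ℝ s)ᗮ ∈ End.invtSubmodule J) {x : V}
    (hx : x ∈ (span ℝ s)ᗮ) (hx1 : ‖x‖ = 1) {a b : ℝ} (hDx : D x = a • x)
    (hAx : (J ∘ₗ D ∘ₗ J) x = b • x) : IsUnitaryEigenset D J (insert x (insert (J x) s)) := by
  have hJx1 : ‖J x‖ = 1 := ((J.isometryOfInner hJorth).norm_map x).trans hx1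
  have hxJx : ⟪J x, x⟫ = 0 := by
    have := inner_map_left_eq_neg_inner_map_right hJorth hJJ x x
    linarith [real_inner_comm x (J x)]
  have hx' : x ∈ (span ℝ (insert (J x) s))ᗮ := by
    rw [span_insert, ← inf_orthogonal]
    exact ⟨mem_orthogonal_singleton_iff_inner_right.2 hxJx, hx⟩
  refine ⟨(hs.1.insert_of_mem_orthogonal (hJW hx) hJx1).insert_of_mem_orthogonal hx' hx1, ?_, ?_⟩
  · rintro v (rfl | rfl | hv)
    · exact ⟨a, hDx⟩
    · exact ⟨-b, map_eq_neg_smul_of_comp_comp_eq_smul hJJ hAx⟩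
    · exact hs.2.1 v hv
  · rintro v (rfl | rfl | hv)
    · exact ⟨J v, by simp, 1, (one_smul _ _).symm⟩
    · exact ⟨x, by simp, -1, by rw [hJJ, neg_one_smul]⟩
    · obtain ⟨w, hw, μ, hJv⟩ := hs.2.2 v hv
      exact ⟨w, Set.mem_insert_of_mem _ (Set.mem_insert_of_mem _ hw), μ, hJv⟩

variable [FiniteDimensional ℝ V]

theorem span_eq_top_of_maximal (hs : Maximal (IsUnitaryEigenset D J) s) (hD : D.IsSymmetric)
    (hJorth : ∀ x y, ⟪J x, J y⟫ = ⟪x, y⟫) (hJJ : ∀ x, J (J x) = -x)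
    (hcomm : D ∘ₗ (J ∘ₗ D ∘ₗ J) = (J ∘ₗ D ∘ₗ J) ∘ₗ D) : span ℝ s = ⊤ := by
  have hskew := inner_map_left_eq_neg_inner_map_right hJorth hJJ
  rw [← orthogonal_eq_bot_iff]
  by_contra hW
  have hDW := hD.orthogonalComplement_mem_invtSubmodule hs.1.span_mem_invtSubmodule_left
  have hJW := orthogonalComplement_mem_invtSubmodule_of_skew hskew
    hs.1.span_mem_invtSubmodule_right
  obtain ⟨x, hx, hx1, a, b, hDx, hAx⟩ := hD.exists_common_eigenvector_mem
    (isSymmetric_comp_comp_of_skew hD hskew) hcomm hW hDW fun v hv => hJW (hDW (hJW hv))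
  have hxs : x ∈ s := hs.2 (hs.1.insert_insert hJorth hJJ hJW hx hx1 hDx hAx)
    ((Set.subset_insert _ _).trans (Set.subset_insert _ _)) (Set.mem_insert x _)
  have hx0 : x = 0 := inner_self_eq_zero.1 (hx x (subset_span hxs))
  simp [hx0] at hx1

theorem exists_basis_of_span_eq_top (hs : IsUnitaryEigenset D J s) (hspan : span ℝ s = ⊤) :
    ∃ b : Basis (Fin (finrank ℝ V)) ℝ V, Orthonormal ℝ b ∧
      (∀ i, ∃ c : ℝ, D (b i) = c • b i) ∧ ∀ i, ∃ j, ∃ μ : ℝ, J (b i) = μ • b j := by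
  let b₀ : Basis s ℝ V := Basis.mk hs.1.linearIndependent (by rw [Subtype.range_coe, hspan])
  let e := b₀.indexEquiv (finBasis ℝ V)
  have hb : ∀ i, b₀.reindex e i = e.symm i := fun i => by rw [Basis.reindex_apply, Basis.mk_apply]
  refine ⟨b₀.reindex e, ?_, fun i => ?_, fun i => ?_⟩
  · rw [show ⇑(b₀.reindex e) = Subtype.val ∘ e.symm from funext hb]
    exact hs.1.comp _ e.symm.injective
  · rw [hb]
    exact hs.2.1 _ (e.symm i).2
  · obtain ⟨w, hw, μ, hJ⟩ := hs.2.2 _ (e.symm i).2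
    exact ⟨e ⟨w, hw⟩, μ, by rw [hb, hb, e.symm_apply_apply]; exact hJ⟩

end IsUnitaryEigenset

end ComplexStructure

theorem commute_JDJ_iff_unitary_eigenbasis_general
    {V : Type*} [NormedAddCommGroup V] [InnerProductSpace ℝ V] [FiniteDimensional ℝ V]
    (D J : V →ₗ[ℝ] V)
    (hsa : ∀ x y : V, (inner ℝ (D x) y : ℝ) = inner ℝ x (D y))
    (hJorth : ∀ x y : V, (inner ℝ (J x) (J y) : ℝ) = inner ℝ x y)
    (hJ2 : J ∘ₗ J = -LinearMap.id) :
    D ∘ₗ (J ∘ₗ D ∘ₗ J) = (J ∘ₗ D ∘ₗ J) ∘ₗ D ↔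
      ∃ b : Module.Basis (Fin (Module.finrank ℝ V)) ℝ V, Orthonormal ℝ b ∧
        (∀ i, ∃ c : ℝ, D (b i) = c • b i) ∧
        (∀ i, ∃ j, ∃ μ : ℝ, J (b i) = μ • b j) := by
  have hJJ : ∀ x, J (J x) = -x := fun x => by simpa using LinearMap.congr_fun hJ2 x
  constructor
  · intro hcomm
    obtain ⟨s, hs⟩ := exists_maximal_isUnitaryEigenset D J
    exact hs.1.exists_basis_of_span_eq_top
      (IsUnitaryEigenset.span_eq_top_of_maximal hs hsa hJorth hJJ hcomm)
  · rintro ⟨b, -, hD, hJ⟩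
    refine b.comp_comm_of_forall_eigenvector hD fun i => ?_
    obtain ⟨j, μ, hJi⟩ := hJ i
    obtain ⟨c, hc⟩ := hD j
    exact ⟨-c, comp_comp_apply_eq_neg_smul hJJ hJi hc⟩

/-- For `D` self-adjoint invertible and `J` an orthogonal complex structure,
`D` commutes with `JDJ` iff there is an orthonormal eigenbasis of `D` whose
elements are mapped by `J` to multiples of basis elements. -/
theorem commute_JDJ_iff_unitary_eigenbasis
    {V : Type*} [NormedAddCommGroup V] [InnerProductSpace ℝ V] [FiniteDimensional ℝ V]
    (D J : V →ₗ[ℝ] V)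
    (hsa : ∀ x y : V, (inner ℝ (D x) y : ℝ) = inner ℝ x (D y))
    (hDbij : Function.Bijective D)
    (hJorth : ∀ x y : V, (inner ℝ (J x) (J y) : ℝ) = inner ℝ x y)
    (hJ2 : J ∘ₗ J = -LinearMap.id) :
    D ∘ₗ (J ∘ₗ D ∘ₗ J) = (J ∘ₗ D ∘ₗ J) ∘ₗ D ↔
      ∃ b : Module.Basis (Fin (Module.finrank ℝ V)) ℝ V, Orthonormal ℝ b ∧
        (∀ i, ∃ c : ℝ, D (b i) = c • b i) ∧
        (∀ i, ∃ j, ∃ μ : ℝ, J (b i) = μ • b j) :=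
  commute_JDJ_iff_unitary_eigenbasis_general D J hsa hJorth hJ2
end

section
/- On ℝ^4 with coordinates (x_1,x_3,x_5,t), the metric ds² = e^{-(2/3)mt}(dx_1² + dx_5²) + (4/9)m² e^{(2/3)mt}(dx_3 + x_5 dx_1)² + e^{-2mt} dt² is Ricci-flat. -/
noncomputable section

/-- Partial derivative `∂_i f` of a function on `ℝ^4`. -/
def pd (f : (Fin 4 → ℝ) → ℝ) (i : Fin 4) (p : Fin 4 → ℝ) : ℝ :=
  fderiv ℝ f p (Pi.single i 1)

/-- The metric `e^{-(2/3)mt}(dx₁² + dx₅²) + (4/9)m² e^{(2/3)mt}(dx₃ + x₅ dx₁)² + e^{-2mt} dt²`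
on `ℝ^4` with coordinates `(x₁, x₃, x₅, t) = (p 0, p 1, p 2, p 3)`. -/
def gMetric (m : ℝ) (p : Fin 4 → ℝ) : Matrix (Fin 4) (Fin 4) ℝ :=
  !![Real.exp (-(2 / 3) * m * p 3) + (4 / 9) * m ^ 2 * Real.exp ((2 / 3) * m * p 3) * (p 2) ^ 2,
       (4 / 9) * m ^ 2 * Real.exp ((2 / 3) * m * p 3) * p 2, 0, 0;
     (4 / 9) * m ^ 2 * Real.exp ((2 / 3) * m * p 3) * p 2,
       (4 / 9) * m ^ 2 * Real.exp ((2 / 3) * m * p 3), 0, 0;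
     0, 0, Real.exp (-(2 / 3) * m * p 3), 0;
     0, 0, 0, Real.exp (-2 * m * p 3)]

/-- Christoffel symbols `Γ^k_{ij}` of the metric. -/
def christoffel (m : ℝ) (k i j : Fin 4) (p : Fin 4 → ℝ) : ℝ :=
  (1 / 2) * ∑ l, (gMetric m p)⁻¹ k l *
    (pd (fun q => gMetric m q l i) j p + pd (fun q => gMetric m q l j) i p
      - pd (fun q => gMetric m q i j) l p)

/-- Riemann curvature tensor `R^l_{kij}` of the metric. -/
def riemann (m : ℝ) (l k i j : Fin 4) (p : Fin 4 → ℝ) : ℝ :=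
  pd (christoffel m l j k) i p - pd (christoffel m l i k) j p
    + ∑ s, christoffel m l i s p * christoffel m s j k p
    - ∑ s, christoffel m l j s p * christoffel m s i k p

/-- Ricci tensor `Ric_{kj} = R^i_{kij}`. -/
def ricci (m : ℝ) (k j : Fin 4) (p : Fin 4 → ℝ) : ℝ :=
  ∑ i, riemann m i k i j p

/-!
The metric depends only on `x₅ = p 2` and `t = p 3`, and on `t` only through `X = e^{mt/3}`:
its components, those of its inverse and their derivatives are polynomials in `m`, `x₅`, `X` and
`X⁻¹`. The Christoffel symbols `Γ^k_{ij} = ½ g^{kl} (∂_j g_{li} + ∂_i g_{lj} - ∂_l g_{ij})`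
turn out to be polynomials in `m`, `x₅` and `X⁴` alone, so Ricci-flatness is a polynomial
identity once they are known.
-/

section PartialDerivative

variable {f g : (Fin 4 → ℝ) → ℝ} {i : Fin 4} {p : Fin 4 → ℝ}

theorem HasFDerivAt.pd_eq {L : (Fin 4 → ℝ) →L[ℝ] ℝ} (h : HasFDerivAt f L p) :
    pd f i p = L (Pi.single i 1) := by
  rw [pd, h.fderiv]

theorem pd_const (c : ℝ) : pd (fun _ => c) i p = 0 := by
  simp [pd]

theorem pd_apply (a : Fin 4) : pd (fun q => q a) i p = if a = i then 1 else 0 :=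
  (hasFDerivAt_apply a p).pd_eq.trans (by simp [Pi.single_apply])

theorem pd_add (hf : DifferentiableAt ℝ f p) (hg : DifferentiableAt ℝ g p) :
    pd (fun q => f q + g q) i p = pd f i p + pd g i p :=
  (hf.hasFDerivAt.add hg.hasFDerivAt).pd_eq

theorem pd_sub (hf : DifferentiableAt ℝ f p) (hg : DifferentiableAt ℝ g p) :
    pd (fun q => f q - g q) i p = pd f i p - pd g i p :=
  (hf.hasFDerivAt.sub hg.hasFDerivAt).pd_eq

theorem pd_mul (hf : DifferentiableAt ℝ f p) (hg : DifferentiableAt ℝ g p) :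
    pd (fun q => f q * g q) i p = pd f i p * g p + f p * pd g i p := by
  rw [(hf.hasFDerivAt.fun_mul hg.hasFDerivAt).pd_eq]
  simp only [add_apply, smul_apply, smul_eq_mul, pd]
  ring

theorem pd_pow (hf : DifferentiableAt ℝ f p) (n : ℕ) :
    pd (fun q => f q ^ n) i p = n * f p ^ (n - 1) * pd f i p := by
  rw [(hf.hasFDerivAt.pow n).pd_eq]
  simp [pd]

theorem pd_exp (hf : DifferentiableAt ℝ f p) :
    pd (fun q => Real.exp (f q)) i p = Real.exp (f p) * pd f i p := by
  rw [hf.hasFDerivAt.exp.pd_eq]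
  simp [pd]

end PartialDerivative

/-- The `X` above; `X⁻¹` is always written `expThird (-m)`, so that no quotient rule is needed. -/
def expThird (m : ℝ) (q : Fin 4 → ℝ) : ℝ := Real.exp (m * q 3 / 3)

theorem expThird_neg (m : ℝ) (q : Fin 4 → ℝ) : expThird (-m) q = (expThird m q)⁻¹ := by
  rw [expThird, expThird, ← Real.exp_neg]
  ring_nf

@[fun_prop]
theorem differentiable_expThird (m : ℝ) : Differentiable ℝ (expThird m) := by
  unfold expThird
  fun_prop

theorem pd_expThird (m : ℝ) (i : Fin 4) (p : Fin 4 → ℝ) :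
    pd (expThird m) i p = if 3 = i then m / 3 * expThird m p else 0 := by
  have h : expThird m = fun q => Real.exp (m / 3 * q 3) := by
    ext q
    rw [expThird, mul_div_right_comm]
  rw [h, pd_exp (by fun_prop), pd_mul (by fun_prop) (by fun_prop), pd_const, pd_apply]
  split_ifs <;> ring

theorem gMetric_eq (m : ℝ) (q : Fin 4 → ℝ) :
    gMetric m q =
      !![expThird (-m) q ^ 2 + 4 / 9 * m ^ 2 * expThird m q ^ 2 * q 2 ^ 2,
          4 / 9 * m ^ 2 * expThird m q ^ 2 * q 2, 0, 0;
        4 / 9 * m ^ 2 * expThird m q ^ 2 * q 2, 4 / 9 * m ^ 2 * expThird m q ^ 2, 0, 0;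
        0, 0, expThird (-m) q ^ 2, 0;
        0, 0, 0, expThird (-m) q ^ 6] := by
  have exp_eq_pow {c : ℝ} (a : ℝ) (k : ℕ) (h : c * 3 = k * a) :
      Real.exp (c * q 3) = expThird a q ^ k := by
    rw [expThird, ← Real.exp_nat_mul]
    congr 1
    linear_combination q 3 / 3 * h
  rw [gMetric, exp_eq_pow (-m) 2 (by ring), exp_eq_pow m 2 (by ring), exp_eq_pow (-m) 6 (by ring)]

def gMetricInv (m : ℝ) (q : Fin 4 → ℝ) : Matrix (Fin 4) (Fin 4) ℝ :=
  !![expThird m q ^ 2, -expThird m q ^ 2 * q 2, 0, 0;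
     -expThird m q ^ 2 * q 2,
       9 / (4 * m ^ 2) * expThird (-m) q ^ 2 + expThird m q ^ 2 * q 2 ^ 2, 0, 0;
     0, 0, expThird m q ^ 2, 0;
     0, 0, 0, expThird m q ^ 6]

theorem gMetric_mul_gMetricInv {m : ℝ} (hm : m ≠ 0) (q : Fin 4 → ℝ) :
    gMetric m q * gMetricInv m q = 1 := by
  have hX : expThird m q ≠ 0 := Real.exp_ne_zero _
  rw [gMetric_eq]
  ext a b
  fin_cases a <;> fin_cases b <;>
    simp [gMetricInv, Matrix.mul_apply, Fin.sum_univ_four, expThird_neg] <;> field_simp <;> ring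

theorem inv_gMetric {m : ℝ} (hm : m ≠ 0) (q : Fin 4 → ℝ) : (gMetric m q)⁻¹ = gMetricInv m q :=
  Matrix.inv_eq_right_inv (gMetric_mul_gMetricInv hm q)

def gMetricDeriv (m : ℝ) (q : Fin 4 → ℝ) : Fin 4 → Matrix (Fin 4) (Fin 4) ℝ :=
  ![0, 0,
    !![8 / 9 * m ^ 2 * expThird m q ^ 2 * q 2, 4 / 9 * m ^ 2 * expThird m q ^ 2, 0, 0;
       4 / 9 * m ^ 2 * expThird m q ^ 2, 0, 0, 0;
       0, 0, 0, 0;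
       0, 0, 0, 0],
    !![-(2 / 3) * m * expThird (-m) q ^ 2 + 8 / 27 * m ^ 3 * expThird m q ^ 2 * q 2 ^ 2,
         8 / 27 * m ^ 3 * expThird m q ^ 2 * q 2, 0, 0;
       8 / 27 * m ^ 3 * expThird m q ^ 2 * q 2, 8 / 27 * m ^ 3 * expThird m q ^ 2, 0, 0;
       0, 0, -(2 / 3) * m * expThird (-m) q ^ 2, 0;
       0, 0, 0, -2 * m * expThird (-m) q ^ 6]]

theorem pd_gMetric (m : ℝ) (i a b : Fin 4) (p : Fin 4 → ℝ) :
    pd (fun q => gMetric m q a b) i p = gMetricDeriv m p i a b := by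
  simp only [gMetric_eq]
  fin_cases a <;> fin_cases b <;> fin_cases i <;>
    simp (disch := fun_prop) only [gMetricDeriv, Matrix.of_apply, Fin.reduceFinMk,
      Matrix.cons_val, Matrix.zero_apply, pd_add, pd_mul, pd_pow, pd_apply, pd_const,
      pd_expThird, Fin.reduceEq, ite_true, ite_false] <;>
    ring

def christoffelTable (m : ℝ) (q : Fin 4 → ℝ) : Fin 4 → Matrix (Fin 4) (Fin 4) ℝ :=
  ![!![0, 0, 2 / 9 * m ^ 2 * expThird m q ^ 4 * q 2, -m / 3;
       0, 0, 2 / 9 * m ^ 2 * expThird m q ^ 4, 0;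
       2 / 9 * m ^ 2 * expThird m q ^ 4 * q 2, 2 / 9 * m ^ 2 * expThird m q ^ 4, 0, 0;
       -m / 3, 0, 0, 0],
    !![0, 0, 1 / 2 - 2 / 9 * m ^ 2 * expThird m q ^ 4 * q 2 ^ 2, 2 / 3 * m * q 2;
       0, 0, -2 / 9 * m ^ 2 * expThird m q ^ 4 * q 2, m / 3;
       1 / 2 - 2 / 9 * m ^ 2 * expThird m q ^ 4 * q 2 ^ 2,
         -2 / 9 * m ^ 2 * expThird m q ^ 4 * q 2, 0, 0;
       2 / 3 * m * q 2, m / 3, 0, 0],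
    !![-4 / 9 * m ^ 2 * expThird m q ^ 4 * q 2, -2 / 9 * m ^ 2 * expThird m q ^ 4, 0, 0;
       -2 / 9 * m ^ 2 * expThird m q ^ 4, 0, 0, 0;
       0, 0, 0, -m / 3;
       0, 0, -m / 3, 0],
    !![m / 3 * expThird m q ^ 4 - 4 / 27 * m ^ 3 * expThird m q ^ 8 * q 2 ^ 2,
         -4 / 27 * m ^ 3 * expThird m q ^ 8 * q 2, 0, 0;
       -4 / 27 * m ^ 3 * expThird m q ^ 8 * q 2, -4 / 27 * m ^ 3 * expThird m q ^ 8, 0, 0;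
       0, 0, m / 3 * expThird m q ^ 4, 0;
       0, 0, 0, -m]]

theorem christoffel_eq_christoffelTable {m : ℝ} (hm : m ≠ 0) (k i j : Fin 4) (p : Fin 4 → ℝ) :
    christoffel m k i j p = christoffelTable m p k i j := by
  have hX : expThird m p ≠ 0 := Real.exp_ne_zero _
  simp only [christoffel, inv_gMetric hm, pd_gMetric, Fin.sum_univ_four]
  fin_cases k <;> fin_cases i <;> fin_cases j <;>
    simp only [gMetricInv, gMetricDeriv, christoffelTable, Matrix.of_apply, Fin.reduceFinMk,
      Matrix.cons_val, Matrix.zero_apply, expThird_neg] <;>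
    field_simp <;> ring

/-- The metric is Ricci-flat. -/
theorem metric_ricci_flat (m : ℝ) (hm : m ≠ 0) :
    ∀ (p : Fin 4 → ℝ) (k j : Fin 4), ricci m k j p = 0 := by
  intro p k j
  have hΓ (l a b : Fin 4) : christoffel m l a b = fun q => christoffelTable m q l a b :=
    funext (christoffel_eq_christoffelTable hm l a b)
  simp only [ricci, riemann, hΓ, Fin.sum_univ_four]
  fin_cases k <;> fin_cases j <;>
    simp (disch := fun_prop) only [christoffelTable, Matrix.of_apply, Fin.reduceFinMk,
      Matrix.cons_val, pd_sub, pd_mul, pd_pow, pd_apply, pd_const, pd_expThird,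
      Fin.reduceEq, ite_true, ite_false] <;>
    ring

end
end
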